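/- arXiv:1606.09625 — 2 statements merged into one kernel-verified Lean document; each statement's English description precedes it below -/
import Mathlib

section
/- The map sending a linearly trivial k-algebra automorphism σ of A_{q,n} to the q-tuple (σ(x_1) − x_1, σ(x_2) − x_2, …, σ(x_q) − x_q) is a bijection from the group I_{q,n} of linearly trivial automorphisms onto the q-fold Cartesian product (m²)^q. -/
set_option synthInstance.maxHeartbeats 400000

noncomputable section

/-- The ring of `n`-nil polynomials `A_{q,n} = k[x_1,…,x_q]/m_0^n`. -/
abbrev Aqn (k : Type) [Field k] (q n : ℕ) : Type :=
  MvPolynomial (Fin q) k ⧸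
    (Ideal.span (Set.range (MvPolynomial.X : Fin q → MvPolynomial (Fin q) k))) ^ n

/-- The image of the variable `x_i` in `A_{q,n}`. -/
def xA (k : Type) [Field k] (q n : ℕ) (i : Fin q) : Aqn k q n :=
  Ideal.Quotient.mk _ (MvPolynomial.X i)

/-- The maximal ideal `m` of `A_{q,n}` generated by `x_1, …, x_q`. -/
def mA (k : Type) [Field k] (q n : ℕ) : Ideal (Aqn k q n) :=
  Ideal.span (Set.range (xA k q n))

/-!
Two automorphisms agreeing on the generators `x_i` are equal, which gives injectivity.
For surjectivity, given `a_i ∈ m²` the substitution `φ : x_i ↦ x_i + a_i` is a well-defined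
endomorphism because `m^n = 0`. Since `φ(uv) - uv = (φu - u) φv + u (φv - v)`, the map `φ - id`
sends `m^j` into `m^(j+1)`; hence `φ y = 0` forces `y ∈ m^j` for every `j`, so `y = 0`.
Being an injective endomorphism of the finite-dimensional `k`-algebra `A_{q,n}`, `φ` is bijective.
-/

namespace RingHom

variable {R : Type*} [CommRing R] (φ : R →+* R) {I : Ideal R}

theorem map_mul_sub_mul (u v : R) : φ (u * v) - u * v = (φ u - u) * φ v + u * (φ v - v) := by
  rw [map_mul]; ring

theorem map_mem_of_map_sub_self_mem {y : R} (h : φ y - y ∈ I) (hy : y ∈ I) : φ y ∈ I := by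
  simpa using add_mem h hy

theorem map_sub_self_mem_sq_of_mem_span {s : Set R} (h₀ : ∀ y, φ y - y ∈ Ideal.span s)
    (hs : ∀ x ∈ s, φ x - x ∈ Ideal.span s ^ 2) {y : R} (hy : y ∈ Ideal.span s) :
    φ y - y ∈ Ideal.span s ^ 2 := by
  induction hy using Submodule.span_induction with
  | mem x hx => exact hs x hx
  | zero => simp
  | add u v _ _ hu hv => simpa [add_sub_add_comm] using add_mem hu hv
  | smul a v hv ih =>
    rw [smul_eq_mul, map_mul_sub_mul]
    refine add_mem ?_ (Ideal.mul_mem_left _ _ ih)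
    rw [sq]
    exact Ideal.mul_mem_mul (h₀ a) (φ.map_mem_of_map_sub_self_mem (h₀ v) hv)

theorem map_sub_self_mem_pow_succ (h₀ : ∀ y, φ y - y ∈ I) (h₁ : ∀ y ∈ I, φ y - y ∈ I ^ 2) :
    ∀ (j : ℕ), ∀ y ∈ I ^ j, φ y - y ∈ I ^ (j + 1)
  | 0, y, _ => by simpa using h₀ y
  | j + 1, y, hy => by
    rw [pow_succ] at hy
    refine Submodule.mul_induction_on hy (fun u hu v hv => ?_) (fun u v hu hv => ?_)
    · rw [map_mul_sub_mul]
      refine add_mem ?_ ?_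
      · rw [pow_succ _ (j + 1)]
        exact Ideal.mul_mem_mul (map_sub_self_mem_pow_succ h₀ h₁ j u hu)
          (φ.map_mem_of_map_sub_self_mem (h₀ v) hv)
      · rw [show j + 1 + 1 = j + 2 from rfl, pow_add]
        exact Ideal.mul_mem_mul hu (h₁ v hv)
    · simpa [add_sub_add_comm] using add_mem hu hv

theorem injective_of_map_sub_self_mem (h₀ : ∀ y, φ y - y ∈ I) (h₁ : ∀ y ∈ I, φ y - y ∈ I ^ 2)
    {N : ℕ} (hN : I ^ N = ⊥) : Function.Injective φ := by
  refine (injective_iff_map_eq_zero φ).mpr fun y hy => ?_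
  have hmem : ∀ j, y ∈ I ^ j := fun j => by
    induction j with
    | zero => simp
    | succ j ih => simpa [hy] using φ.map_sub_self_mem_pow_succ h₀ h₁ j y ih
  simpa [hN] using hmem N

end RingHom

namespace MvPolynomial

theorem aeval_mem_pow_of_mem_pow_idealOfVars {σ R B : Type*} [CommSemiring R]
    [CommSemiring B] [Algebra R B] {I : Ideal B} {y : σ → B} (hy : ∀ i, y i ∈ I) {n : ℕ}
    {p : MvPolynomial σ R} (hp : p ∈ idealOfVars σ R ^ n) : aeval y p ∈ I ^ n := by
  have hmap : (idealOfVars σ R).map (aeval y) ≤ I := by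
    rw [Ideal.map_span, Ideal.span_le]
    rintro _ ⟨_, ⟨i, rfl⟩, rfl⟩
    simpa using hy i
  refine Ideal.pow_right_mono hmap n ?_
  rw [← Ideal.map_pow]
  exact Ideal.mem_map_of_mem _ hp

end MvPolynomial

namespace Aqn

variable {k : Type} [Field k] {q n : ℕ}

theorem algHom_ext {B : Type*} [Semiring B] [Algebra k B] {f g : Aqn k q n →ₐ[k] B}
    (h : ∀ i, f (xA k q n i) = g (xA k q n i)) : f = g :=
  Ideal.Quotient.algHom_ext k (MvPolynomial.algHom_ext h)

theorem xA_mem_mA (i : Fin q) : xA k q n i ∈ mA k q n :=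
  Ideal.subset_span ⟨i, rfl⟩

theorem mA_eq_map : mA k q n = (MvPolynomial.idealOfVars (Fin q) k).map (Ideal.Quotient.mk _) := by
  rw [mA, Ideal.map_span, ← Set.range_comp]
  rfl

theorem mA_pow_eq_bot : mA k q n ^ n = ⊥ := by
  rw [mA_eq_map, ← Ideal.map_pow]
  exact Ideal.map_quotient_self _

theorem adjoin_range_xA : Algebra.adjoin k (Set.range (xA k q n)) = ⊤ := by
  have := MvPolynomial.mkₐ_eq_aeval (MvPolynomial.idealOfVars (Fin q) k ^ n)
  rw [Algebra.adjoin_range_eq_range_aeval, AlgHom.range_eq_top]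
  exact this ▸ Ideal.Quotient.mkₐ_surjective k _

instance : Module.Finite k (Aqn k q n) := by
  have hint : ∀ x ∈ Set.range (xA k q n), IsIntegral k x := by
    rintro _ ⟨i, rfl⟩
    refine IsIntegral.of_pow n.succ_pos ?_
    have hmem : xA k q n i ^ (n + 1) ∈ mA k q n ^ n :=
      Ideal.pow_le_pow_right n.le_succ (Ideal.pow_mem_pow (xA_mem_mA i) _)
    rw [mA_pow_eq_bot, Ideal.mem_bot] at hmem
    rw [hmem]
    exact isIntegral_zero
  have := fg_adjoin_of_finite (Set.finite_range _) hint
  rwa [adjoin_range_xA, Algebra.top_toSubmodule, ← Module.finite_def] at this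

def subst (y : Fin q → Aqn k q n) (hy : ∀ i, y i ∈ mA k q n) : Aqn k q n →ₐ[k] Aqn k q n :=
  Ideal.Quotient.liftₐ _ (MvPolynomial.aeval y) fun _ hp => by
    simpa [mA_pow_eq_bot] using MvPolynomial.aeval_mem_pow_of_mem_pow_idealOfVars hy hp

@[simp]
theorem subst_xA (y : Fin q → Aqn k q n) (hy : ∀ i, y i ∈ mA k q n) (i : Fin q) :
    subst y hy (xA k q n i) = y i :=
  MvPolynomial.aeval_X y i

theorem bijective_of_sub_mem_sq (φ : Aqn k q n →ₐ[k] Aqn k q n)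
    (hφ : ∀ i, φ (xA k q n i) - xA k q n i ∈ mA k q n ^ 2) : Function.Bijective φ := by
  have h₀ : ∀ y, φ y - y ∈ mA k q n := by
    have hcomp : (Ideal.Quotient.mkₐ k (mA k q n)).comp φ = Ideal.Quotient.mkₐ k (mA k q n) :=
      algHom_ext fun i => by
        simpa [Ideal.Quotient.mk_eq_mk_iff_sub_mem] using Ideal.pow_le_self two_ne_zero (hφ i)
    exact fun y => Ideal.Quotient.eq.mp (AlgHom.congr_fun hcomp y)
  have h₁ : ∀ y ∈ mA k q n, φ y - y ∈ mA k q n ^ 2 := fun _ =>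
    φ.toRingHom.map_sub_self_mem_sq_of_mem_span h₀ (by rintro _ ⟨i, rfl⟩; exact hφ i)
  have hinj := φ.toRingHom.injective_of_map_sub_self_mem h₀ h₁ mA_pow_eq_bot
  exact ⟨hinj, LinearMap.surjective_of_injective (f := φ.toLinearMap) hinj⟩

end Aqn

theorem linearly_trivial_auts_bijection_general (k : Type) [Field k] (q n : ℕ) :
    Function.Bijective
      (fun σ : {σ : Aqn k q n ≃ₐ[k] Aqn k q n //
          ∀ i, σ.1 (xA k q n i) - xA k q n i ∈ (mA k q n) ^ 2} =>
        (fun i => ⟨σ.1 (xA k q n i) - xA k q n i, σ.2 i⟩ :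
          Fin q → ((mA k q n) ^ 2 : Ideal (Aqn k q n)))) := by
  constructor
  · rintro ⟨σ, _⟩ ⟨τ, _⟩ h
    refine Subtype.ext (AlgEquiv.coe_toAlgHom_injective (Aqn.algHom_ext fun i => ?_))
    simpa using congrArg Subtype.val (congrFun h i)
  · intro a
    have hy : ∀ i, xA k q n i + a i ∈ mA k q n := fun i =>
      add_mem (Aqn.xA_mem_mA i) (Ideal.pow_le_self two_ne_zero (a i).2)
    set φ := Aqn.subst _ hy
    have hφ : ∀ i, φ (xA k q n i) - xA k q n i = a i := by simp [φ]
    have hφa : ∀ i, φ (xA k q n i) - xA k q n i ∈ mA k q n ^ 2 := fun i => hφ i ▸ (a i).2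
    exact ⟨⟨.ofBijective φ (Aqn.bijective_of_sub_mem_sq φ hφa), hφa⟩,
      funext fun i => Subtype.ext (hφ i)⟩

/-- `σ ↦ (σ(x_1) - x_1, …, σ(x_q) - x_q)` is a bijection from the group
`I_{q,n}` of linearly trivial automorphisms of `A_{q,n}` onto `(m²)^q`. -/
theorem linearly_trivial_auts_bijection (k : Type) [Field k] (q n : ℕ)
    (hq : 1 ≤ q) (hn : 2 ≤ n) :
    Function.Bijective
      (fun σ : {σ : Aqn k q n ≃ₐ[k] Aqn k q n //
          ∀ i, σ.1 (xA k q n i) - xA k q n i ∈ (mA k q n) ^ 2} =>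
        (fun i => ⟨σ.1 (xA k q n i) - xA k q n i, σ.2 i⟩ :
          Fin q → ((mA k q n) ^ 2 : Ideal (Aqn k q n)))) :=
  linearly_trivial_auts_bijection_general k q n
end
end

section
/- For an integer j ≥ 0, let I^j_{q,n} = {σ a k-algebra automorphism of A_{q,n} : σ(x_i) − x_i ∈ m^{j+2} for all i = 1, …, q}. Then I^j_{q,n} is a subgroup of the automorphism group of A_{q,n}, and the map α_j sending σ ∈ I^j_{q,n} to the q-tuple of residue classes (σ(x_1) − x_1, …, σ(x_q) − x_q) in (m^{j+2}/m^{j+3})^q is a surjective group homomorphism from I^j_{q,n} onto the additive group (m^{j+2}/m^{j+3})^q whose kernel is I^{j+1}_{q,n}. In particular I^j_{q,n}/I^{j+1}_{q,n} is isomorphic as a group to (m^{j+2}/m^{j+3})^q. -/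
set_option synthInstance.maxHeartbeats 400000

noncomputable section

/-- The set `I^j_{q,n}` of automorphisms congruent to the identity modulo `m^(j+2)`. -/
def IjSet (k : Type) [Field k] (q n j : ℕ) : Set (Aqn k q n ≃ₐ[k] Aqn k q n) :=
  {σ | ∀ i, σ (xA k q n i) - xA k q n i ∈ (mA k q n) ^ (j + 2)}

/-- `m^(j+2)` viewed as a `k`-subspace of `A_{q,n}`. -/
def Nsub (k : Type) [Field k] (q n j : ℕ) : Submodule k (Aqn k q n) :=
  Submodule.restrictScalars k ((mA k q n) ^ (j + 2))

/-- `m^(j+3)` viewed as a `k`-subspace of `m^(j+2)`. -/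
def Psub (k : Type) [Field k] (q n j : ℕ) : Submodule k (Nsub k q n j) :=
  Submodule.comap (Nsub k q n j).subtype
    (Submodule.restrictScalars k ((mA k q n) ^ (j + 3)))

/-- The quotient `m^(j+2)/m^(j+3)` as a `k`-vector space (additive group). -/
abbrev Qj (k : Type) [Field k] (q n j : ℕ) : Type :=
  Nsub k q n j ⧸ Psub k q n j

/-- The map `α_j` sending `σ ∈ I^j_{q,n}` to the residues of `σ(x_i) - x_i` in
`(m^(j+2)/m^(j+3))^q`. -/
def alphaJ (k : Type) [Field k] (q n j : ℕ)
    (σ : {σ : Aqn k q n ≃ₐ[k] Aqn k q n // σ ∈ IjSet k q n j}) :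
    Fin q → Qj k q n j :=
  fun i => Submodule.Quotient.mk (⟨σ.1 (xA k q n i) - xA k q n i, σ.2 i⟩ : Nsub k q n j)


/-!
For an algebra endomorphism `σ`, the displacement `d = σ - id` is a twisted derivation,
`d (a * b) = σ a * d b + d a * b`. Hence if `σ` moves the generators `xᵢ` of `m` into
`m ^ (e + 1)`, it moves `m ^ t` into `m ^ (t + e)`. For `e = j + 1 ≥ 1` this shows that `I^j`
is closed under composition and inverses, and that `σ ↦ (σ xᵢ - xᵢ)ᵢ` is additive modulo
`m ^ (j + 3)`: the defect `σ (τ x - x) - (τ x - x)` lies in `m ^ (2 j + 3)`. Since `m` is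
nilpotent, an additive map `f` such that `f - id` raises the `m`-adic order is bijective, so
every `xᵢ ↦ xᵢ + yᵢ` with `yᵢ ∈ m ^ (j + 2)` is an automorphism, which gives surjectivity.
-/

open Set

section Displacement

theorem map_mul_sub_mul {A F : Type*} [CommRing A] [FunLike F A A] [RingHomClass F A A]
    (f : F) (a b : A) :
    f (a * b) - a * b = f a * (f b - b) + (f a - a) * b := by
  rw [map_mul]; ring

variable {R A F : Type*} [CommRing R] [CommRing A] [Algebra R A]
  [FunLike F A A] [AlgHomClass F R A A]
variable {s : Set A} (hs : Algebra.adjoin R s = ⊤) {e : ℕ} {f : F}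
  (hf : ∀ x ∈ s, f x - x ∈ Ideal.span s ^ (e + 1))
include hs hf

theorem sub_mem_span_pow_of_adjoin_eq_top (y : A) : f y - y ∈ Ideal.span s ^ e := by
  have hy : y ∈ Algebra.adjoin R s := hs ▸ Algebra.mem_top
  induction hy using Algebra.adjoin_induction with
  | mem x hx => exact Ideal.pow_le_pow_right e.le_succ (hf x hx)
  | algebraMap r => rw [AlgHomClass.commutes, sub_self]; exact zero_mem _
  | add a b _ _ ha hb => rw [map_add, add_sub_add_comm]; exact add_mem ha hb
  | mul a b _ _ ha hb =>
    rw [map_mul_sub_mul]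
    exact add_mem (Ideal.mul_mem_left _ _ hb) (Ideal.mul_mem_right _ _ ha)

theorem sub_mem_span_pow_succ_of_mem_span {y : A} (hy : y ∈ Ideal.span s) :
    f y - y ∈ Ideal.span s ^ (e + 1) := by
  induction hy using Submodule.span_induction with
  | mem x hx => exact hf x hx
  | zero => simp
  | add a b _ _ ha hb => rw [map_add, add_sub_add_comm]; exact add_mem ha hb
  | smul r b hb hfb =>
    rw [smul_eq_mul, map_mul_sub_mul, pow_succ]
    exact add_mem (Ideal.mul_mem_left _ _ (pow_succ (Ideal.span s) e ▸ hfb))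
      (Ideal.mul_mem_mul (sub_mem_span_pow_of_adjoin_eq_top hs hf r) hb)

theorem sub_mem_span_pow_add_of_mem_pow {t : ℕ} {y : A} (hy : y ∈ Ideal.span s ^ t) :
    f y - y ∈ Ideal.span s ^ (t + e) := by
  induction t generalizing y with
  | zero => simpa using sub_mem_span_pow_of_adjoin_eq_top hs hf y
  | succ t ih =>
    rw [pow_succ] at hy
    refine Submodule.mul_induction_on hy (fun a ha b hb => ?_) (fun a b ha hb => ?_)
    · have hfa : f a ∈ Ideal.span s ^ t := by
        simpa using add_mem (Ideal.pow_le_pow_right le_self_add (ih ha)) ha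
      rw [map_mul_sub_mul]
      refine add_mem ?_ ?_
      · rw [show t + 1 + e = t + (e + 1) by omega, pow_add]
        exact Ideal.mul_mem_mul hfa (sub_mem_span_pow_succ_of_mem_span hs hf hb)
      · rw [show t + 1 + e = t + e + 1 by omega, pow_succ]
        exact Ideal.mul_mem_mul (ih ha) hb
    · rw [map_add, add_sub_add_comm]; exact add_mem ha hb

end Displacement

theorem bijective_of_sub_mem_pow_succ {A : Type*} [CommRing A] {m : Ideal A} {N : ℕ}
    (hN : m ^ N = ⊥) (f : A →+ A) (hf : ∀ t, ∀ y ∈ m ^ t, f y - y ∈ m ^ (t + 1)) :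
    Function.Bijective f := by
  refine ⟨(injective_iff_map_eq_zero f).mpr fun z hz => ?_, fun w => ?_⟩
  · have hzt : ∀ t, z ∈ m ^ t := by
      intro t
      induction t with
      | zero => simp
      | succ t ih => simpa [hz] using hf t z ih
    simpa [hN] using hzt N
  · have happrox : ∀ t, ∃ z, w - f z ∈ m ^ t := by
      intro t
      induction t with
      | zero => exact ⟨0, by simp⟩
      | succ t ih =>
        obtain ⟨z, hz⟩ := ih
        refine ⟨z + (w - f z), ?_⟩
        convert neg_mem (hf t _ hz) using 1
        rw [map_add]; ring
    obtain ⟨z, hz⟩ := happrox N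
    exact ⟨z, (sub_eq_zero.mp (by simpa [hN] using hz)).symm⟩

section CongruenceSubgroup

variable {R A : Type*} [CommRing R] [CommRing A] [Algebra R A]
  {s : Set A} (hs : Algebra.adjoin R s = ⊤) {e : ℕ} (he : 1 ≤ e)
include hs he

theorem mul_apply_sub_self_sub_add_mem_pow {σ τ : A ≃ₐ[R] A}
    (hσ : ∀ x ∈ s, σ x - x ∈ Ideal.span s ^ (e + 1)) {x : A}
    (hτx : τ x - x ∈ Ideal.span s ^ (e + 1)) :
    (σ * τ) x - x - (σ x - x + (τ x - x)) ∈ Ideal.span s ^ (e + 2) := by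
  have key : σ (τ x - x) - (τ x - x) ∈ Ideal.span s ^ (e + 2) :=
    Ideal.pow_le_pow_right (by omega) (sub_mem_span_pow_add_of_mem_pow hs hσ hτx)
  convert key using 1
  rw [AlgEquiv.mul_apply, map_sub]
  ring

variable (e) in
def congruenceSubgroup : Subgroup (A ≃ₐ[R] A) where
  carrier := {σ | ∀ x ∈ s, σ x - x ∈ Ideal.span s ^ (e + 1)}
  one_mem' x _ := by simp
  mul_mem' {σ τ} hσ hτ x hx := by
    rw [← sub_add_cancel ((σ * τ) x - x) (σ x - x + (τ x - x))]
    exact add_mem (Ideal.pow_le_pow_right (by omega)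
      (mul_apply_sub_self_sub_add_mem_pow hs he hσ (hτ x hx))) (add_mem (hσ x hx) (hτ x hx))
  inv_mem' {σ} hσ x hx := by
    set w := σ⁻¹ x - x
    -- `σ w - w` lies `e ≥ 1` orders deeper than `w`, so `hw` lifts `w ∈ m ^ e` to `m ^ (e + 1)`.
    have hw : w = -(σ x - x) - (σ w - w) := by
      simp only [w, map_sub, AlgEquiv.aut_inv, AlgEquiv.apply_symm_apply]; ring
    have hwe : w ∈ Ideal.span s ^ e := by
      rw [hw]
      exact sub_mem (neg_mem (Ideal.pow_le_pow_right e.le_succ (hσ x hx)))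
        (sub_mem_span_pow_of_adjoin_eq_top hs hσ w)
    rw [hw]
    exact sub_mem (neg_mem (hσ x hx))
      (Ideal.pow_le_pow_right (by omega) (sub_mem_span_pow_add_of_mem_pow hs hσ hwe))

theorem bijective_of_forall_sub_mem_pow {N : ℕ} (hN : Ideal.span s ^ N = ⊥)
    {f : A →ₐ[R] A}
    (hf : ∀ x ∈ s, f x - x ∈ Ideal.span s ^ (e + 1)) : Function.Bijective f :=
  bijective_of_sub_mem_pow_succ hN f fun _ _ hy =>
    Ideal.pow_le_pow_right (by omega) (sub_mem_span_pow_add_of_mem_pow hs hf hy)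

end CongruenceSubgroup

section Aqn

variable {k : Type} [Field k] {q n : ℕ}

theorem range_xA : range (xA k q n) =
    Ideal.Quotient.mkₐ k _ '' range (MvPolynomial.X : Fin q → MvPolynomial (Fin q) k) := by
  rw [← range_comp]; rfl

theorem adjoin_range_xA : Algebra.adjoin k (range (xA k q n)) = ⊤ := by
  rw [range_xA, ← AlgHom.map_adjoin, MvPolynomial.adjoin_range_X, Algebra.map_top,
    AlgHom.range_eq_top]
  exact Ideal.Quotient.mkₐ_surjective k _

theorem mA_pow_eq_bot : mA k q n ^ n = ⊥ := by
  rw [mA, range_xA, ← Ideal.map_span, ← Ideal.map_pow, Ideal.map_eq_bot_iff_le_ker]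
  intro p hp
  simpa [RingHom.mem_ker, Ideal.Quotient.eq_zero_iff_mem] using hp

def liftAqn {B : Type*} [CommRing B] [Algebra k B] {I : Ideal B} (hI : I ^ n = ⊥)
    (v : Fin q → B) (hv : ∀ i, v i ∈ I) : Aqn k q n →ₐ[k] B :=
  Ideal.Quotient.liftₐ _ (MvPolynomial.aeval v) fun p hp => by
    have hle : Ideal.map (MvPolynomial.aeval (R := k) v)
        (Ideal.span (range (MvPolynomial.X : Fin q → MvPolynomial (Fin q) k))) ≤ I := by
      rw [Ideal.map_span, Ideal.span_le]
      rintro _ ⟨_, ⟨i, rfl⟩, rfl⟩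
      simpa using hv i
    have hp' := Ideal.mem_map_of_mem (MvPolynomial.aeval (R := k) v) hp
    rw [Ideal.map_pow] at hp'
    simpa [hI] using Ideal.pow_right_mono hle n hp'

theorem liftAqn_xA {B : Type*} [CommRing B] [Algebra k B] {I : Ideal B} (hI : I ^ n = ⊥)
    (v : Fin q → B) (hv : ∀ i, v i ∈ I) (i : Fin q) : liftAqn hI v hv (xA k q n i) = v i :=
  MvPolynomial.aeval_X v i

theorem IjSet_eq_congruenceSubgroup (j : ℕ) :
    IjSet k q n j = (congruenceSubgroup (adjoin_range_xA (k := k) (q := q) (n := n)) (j + 1)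
      (Nat.le_add_left 1 j) : Set (Aqn k q n ≃ₐ[k] Aqn k q n)) := by
  ext σ
  exact (forall_mem_range (f := xA k q n) (p := fun x => σ x - x ∈ mA k q n ^ (j + 2))).symm

theorem mem_Psub_iff {j : ℕ} {y : Nsub k q n j} :
    y ∈ Psub k q n j ↔ (y : Aqn k q n) ∈ mA k q n ^ (j + 3) :=
  Iff.rfl

theorem alphaJ_mul {j : ℕ} (σ τ π : {σ : Aqn k q n ≃ₐ[k] Aqn k q n // σ ∈ IjSet k q n j})
    (hπ : π.1 = σ.1 * τ.1) : alphaJ k q n j π = alphaJ k q n j σ + alphaJ k q n j τ := by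
  funext i
  rw [Pi.add_apply, alphaJ, alphaJ, alphaJ, ← Submodule.Quotient.mk_add, Submodule.Quotient.eq,
    mem_Psub_iff]
  have hσ := (IjSet_eq_congruenceSubgroup j).subset σ.2
  simp only [Submodule.coe_sub, Submodule.coe_add, hπ]
  exact mul_apply_sub_self_sub_add_mem_pow adjoin_range_xA (Nat.le_add_left 1 j) hσ (τ.2 i)

theorem alphaJ_eq_zero_iff {j : ℕ}
    (σ : {σ : Aqn k q n ≃ₐ[k] Aqn k q n // σ ∈ IjSet k q n j}) :
    alphaJ k q n j σ = 0 ↔ σ.1 ∈ IjSet k q n (j + 1) := by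
  simp only [funext_iff, alphaJ, Pi.zero_apply, Submodule.Quotient.mk_eq_zero, mem_Psub_iff]
  rfl

theorem alphaJ_surjective (j : ℕ) : Function.Surjective (alphaJ k q n j) := by
  intro c
  choose y hy using fun i => Submodule.Quotient.mk_surjective (Psub k q n j) (c i)
  let g : Aqn k q n →ₐ[k] Aqn k q n :=
    liftAqn mA_pow_eq_bot (fun i => xA k q n i + (y i : Aqn k q n)) fun i =>
      add_mem (Ideal.subset_span ⟨i, rfl⟩) (Ideal.pow_le_self (by omega) (y i).2)
  have hg : ∀ i, g (xA k q n i) - xA k q n i = y i := fun i => by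
    rw [liftAqn_xA, add_sub_cancel_left]
  have hgI : ∀ x ∈ range (xA k q n),
      g x - x ∈ Ideal.span (range (xA k q n)) ^ (j + 1 + 1) := by
    rintro _ ⟨i, rfl⟩
    rw [hg]
    exact (y i).2
  let σ := AlgEquiv.ofBijective g <|
    bijective_of_forall_sub_mem_pow adjoin_range_xA (Nat.le_add_left 1 j) mA_pow_eq_bot hgI
  refine ⟨⟨σ, fun i => hgI _ ⟨i, rfl⟩⟩, funext fun i => ?_⟩
  rw [alphaJ, ← hy i]
  exact congrArg _ (Subtype.ext (hg i))

end Aqn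

theorem Ij_filtration_general (k : Type) [Field k] (q n : ℕ) (j : ℕ) :
    (∃ H : Subgroup (Aqn k q n ≃ₐ[k] Aqn k q n), (H : Set _) = IjSet k q n j) ∧
    (∀ σ τ π : {σ : Aqn k q n ≃ₐ[k] Aqn k q n // σ ∈ IjSet k q n j},
      π.1 = σ.1 * τ.1 → alphaJ k q n j π = alphaJ k q n j σ + alphaJ k q n j τ) ∧
    Function.Surjective (alphaJ k q n j) ∧
    (∀ σ : {σ : Aqn k q n ≃ₐ[k] Aqn k q n // σ ∈ IjSet k q n j},
      alphaJ k q n j σ = 0 ↔ σ.1 ∈ IjSet k q n (j + 1)) :=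
  ⟨⟨_, (IjSet_eq_congruenceSubgroup j).symm⟩, alphaJ_mul, alphaJ_surjective j,
    alphaJ_eq_zero_iff⟩

/-- `I^j_{q,n}` is a subgroup of the automorphism group of `A_{q,n}`, and
`α_j : σ ↦ (residues of σ(x_i) - x_i in m^(j+2)/m^(j+3))` is a surjective group homomorphism
onto the additive group `(m^(j+2)/m^(j+3))^q` whose kernel is `I^(j+1)_{q,n}` (so that
`I^j_{q,n}/I^(j+1)_{q,n} ≅ (m^(j+2)/m^(j+3))^q`). -/
theorem Ij_filtration (k : Type) [Field k] (q n : ℕ) (hq : 1 ≤ q) (hn : 2 ≤ n) (j : ℕ) :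
    (∃ H : Subgroup (Aqn k q n ≃ₐ[k] Aqn k q n), (H : Set _) = IjSet k q n j) ∧
    (∀ σ τ π : {σ : Aqn k q n ≃ₐ[k] Aqn k q n // σ ∈ IjSet k q n j},
      π.1 = σ.1 * τ.1 → alphaJ k q n j π = alphaJ k q n j σ + alphaJ k q n j τ) ∧
    Function.Surjective (alphaJ k q n j) ∧
    (∀ σ : {σ : Aqn k q n ≃ₐ[k] Aqn k q n // σ ∈ IjSet k q n j},
      alphaJ k q n j σ = 0 ↔ σ.1 ∈ IjSet k q n (j + 1)) :=
  Ij_filtration_general k q n j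
end
end
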